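/- If P_CTRL, P_SIFT ∈ [0,1] are reals with 1/2 − P_CTRL − 6 P_SIFT^{1/4} ≤ F where F := Σ_e p(0,e)^{1/2} p(1,e)^{1/2} for a joint distribution p on {0,1} × (finite set), then the mutual information of the corresponding random variables satisfies I(A:E) ≤ 2 sqrt(P_CTRL + 6 P_SIFT^{1/4}). -/

import Mathlib

open Finset

/-- Shannon entropy (base 2) of a finitely supported probability vector. -/
noncomputable def shannonEntropy {α : Type*} [Fintype α] (q : α → ℝ) : ℝ :=
  -∑ a, q a * Real.logb 2 (q a)

/-- Mutual information of a joint distribution `p` on `Fin 2 × E`: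
`I(A:E) = H(A) + H(E) - H(A,E)`. -/
noncomputable def mutualInfo {E : Type*} [Fintype E] (p : Fin 2 → E → ℝ) : ℝ :=
  shannonEntropy (fun z => ∑ e, p z e) + shannonEntropy (fun e => ∑ z, p z e)
    - shannonEntropy (fun ze : Fin 2 × E => p ze.1 ze.2)

-- binary entropy lower bound via concavity
lemma binEnt_lb {x : ℝ} (hx0 : 0 ≤ x) (hx : x ≤ 1/2) :
    2 * x * Real.log 2 ≤ Real.binEntropy x := by
  have hc := Real.strictConcave_binEntropy.concaveOn
  have h0 : (0:ℝ) ∈ Set.Icc (0:ℝ) 1 := by norm_num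
  have h1 : (2⁻¹:ℝ) ∈ Set.Icc (0:ℝ) 1 := by norm_num
  have hcomb := hc.2 h0 h1 (show (0:ℝ) ≤ 1 - 2*x by linarith) (show (0:ℝ) ≤ 2*x by linarith)
    (show (1 - 2*x) + 2*x = 1 by ring)
  have harg : (1 - 2*x) • (0:ℝ) + (2*x) • (2⁻¹:ℝ) = x := by
    simp [smul_eq_mul]; ring
  rw [harg] at hcomb
  simpa [smul_eq_mul, Real.binEntropy_zero, Real.binEntropy_two_inv, mul_comm] using hcomb

-- key per-term entropy inequality
lemma key_term (a b : ℝ) (ha : 0 ≤ a) (hb : 0 ≤ b) :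
    (a + b) - |a - b| ≤
      (a + b) * Real.logb 2 (a + b) - a * Real.logb 2 a - b * Real.logb 2 b := by
  wlog hab : a ≤ b with H
  · have := H b a hb ha (le_of_not_ge hab)
    rw [abs_sub_comm, add_comm a b]
    linarith [this]
  rcases eq_or_lt_of_le ha with h0 | h0
  · subst h0
    simp [abs_of_nonneg hb]
  · have hb' : 0 < b := lt_of_lt_of_le h0 hab
    have hq : 0 < a + b := by linarith
    have hx0 : 0 ≤ a / (a+b) := by positivity
    have hx : a / (a+b) ≤ 1/2 := by rw [div_le_iff₀ hq]; linarith
    have hL0 := binEnt_lb hx0 hx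
    have hbe : Real.binEntropy (a/(a+b))
        = ((a+b)*Real.log (a+b) - a*Real.log a - b*Real.log b)/(a+b) := by
      rw [Real.binEntropy]
      have h1 : 1 - a/(a+b) = b/(a+b) := by field_simp; ring
      rw [h1, Real.log_inv, Real.log_inv, Real.log_div h0.ne' hq.ne',
        Real.log_div hb'.ne' hq.ne']
      field_simp
      ring
    rw [hbe] at hL0
    have hlog2 : 0 < Real.log 2 := Real.log_pos (by norm_num)
    have hmain : 2*a*Real.log 2 ≤ (a+b)*Real.log (a+b) - a*Real.log a - b*Real.log b := by
      have := mul_le_mul_of_nonneg_left hL0 hq.le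
      rw [mul_div_cancel₀ _ hq.ne'] at this
      calc 2*a*Real.log 2 = (a+b) * (2 * (a/(a+b)) * Real.log 2) := by
            field_simp
        _ ≤ _ := this
    rw [abs_of_nonpos (by linarith)]
    simp only [Real.logb]
    rw [show (a+b) - -(a-b) = 2*a by ring]
    rw [mul_div_assoc', mul_div_assoc', mul_div_assoc', div_sub_div_same, div_sub_div_same, le_div_iff₀ hlog2]
    linarith [hmain]

theorem stmt15 {E : Type*} [Fintype E] (p : Fin 2 → E → ℝ)
    (hp : ∀ z e, 0 ≤ p z e) (hsum : ∑ z, ∑ e, p z e = 1)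
    (P_CTRL P_SIFT : ℝ)
    (hC0 : 0 ≤ P_CTRL) (hC1 : P_CTRL ≤ 1) (hS0 : 0 ≤ P_SIFT) (hS1 : P_SIFT ≤ 1)
    (h : 1 / 2 - P_CTRL - 6 * P_SIFT ^ ((1 : ℝ) / 4) ≤
        ∑ e, Real.sqrt (p 0 e) * Real.sqrt (p 1 e)) :
    mutualInfo p ≤ 2 * Real.sqrt (P_CTRL + 6 * P_SIFT ^ ((1 : ℝ) / 4)) := by
  classical
  obtain ⟨F, hF⟩ : ∃ F, F = ∑ e, Real.sqrt (p 0 e) * Real.sqrt (p 1 e) := ⟨_, rfl⟩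
  obtain ⟨D, hD⟩ : ∃ D, D = P_CTRL + 6 * P_SIFT ^ ((1 : ℝ) / 4) := ⟨_, rfl⟩
  rw [← hF] at h
  rw [← hD]
  have hX : 0 ≤ P_SIFT ^ ((1:ℝ)/4) := Real.rpow_nonneg hS0 _
  have hD0 : 0 ≤ D := by rw [hD]; linarith
  have hDF : 1/2 - D ≤ F := by rw [hD]; linarith [h]
  have hq1 : ∑ e, (p 0 e + p 1 e) = 1 := by
    rw [Finset.sum_add_distrib]
    simpa [Fin.sum_univ_two] using hsum
  -- Step A : mutualInfo ≤ ∑ |p0 - p1|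
  have hA : mutualInfo p ≤ ∑ e, |p 0 e - p 1 e| := by
    have hexp : mutualInfo p = shannonEntropy (fun z => ∑ e, p z e)
        - ∑ e, ((p 0 e + p 1 e) * Real.logb 2 (p 0 e + p 1 e)
            - p 0 e * Real.logb 2 (p 0 e) - p 1 e * Real.logb 2 (p 1 e)) := by
      unfold mutualInfo shannonEntropy
      rw [Fintype.sum_prod_type]
      simp only [Fin.sum_univ_two]
      rw [Finset.sum_sub_distrib, Finset.sum_sub_distrib]
      ring
    have hHA : shannonEntropy (fun z => ∑ e, p z e) ≤ 1 := by
      have hαβ : ∑ e, p 0 e + ∑ e, p 1 e = 1 := by simpa [Fin.sum_univ_two] using hsum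
      have heq : shannonEntropy (fun z => ∑ e, p z e)
          = Real.binEntropy (∑ e, p 0 e) / Real.log 2 := by
        unfold shannonEntropy
        rw [Fin.sum_univ_two, Real.binEntropy]
        have h1 : 1 - ∑ e, p 0 e = ∑ e, p 1 e := by linarith
        rw [h1, Real.log_inv, Real.log_inv]
        simp only [Real.logb]
        ring
      rw [heq, div_le_one (Real.log_pos (by norm_num))]
      exact Real.binEntropy_le_log_two
    have hterm : ∀ e ∈ Finset.univ (α := E), (p 0 e + p 1 e) - |p 0 e - p 1 e| ≤
        (p 0 e + p 1 e) * Real.logb 2 (p 0 e + p 1 e)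
          - p 0 e * Real.logb 2 (p 0 e) - p 1 e * Real.logb 2 (p 1 e) :=
      fun e _ => key_term _ _ (hp 0 e) (hp 1 e)
    have hsumterm := Finset.sum_le_sum hterm
    rw [Finset.sum_sub_distrib, hq1] at hsumterm
    rw [hexp]
    linarith [hsumterm]
  -- Step B : Cauchy-Schwarz estimates
  have habs : ∀ e, |p 0 e - p 1 e| =
      Real.sqrt (p 0 e + p 1 e) * (|p 0 e - p 1 e| / Real.sqrt (p 0 e + p 1 e)) := by
    intro e
    rcases (add_nonneg (hp 0 e) (hp 1 e)).eq_or_lt with hq | hq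
    · have h0 : p 0 e = 0 := le_antisymm (by linarith [hp 1 e]) (hp 0 e)
      have h1 : p 1 e = 0 := by linarith [hp 0 e]
      simp [h0, h1]
    · rw [mul_comm, div_mul_cancel₀ _ (ne_of_gt (Real.sqrt_pos.2 hq))]
  have hsq : ∀ e, (|p 0 e - p 1 e| / Real.sqrt (p 0 e + p 1 e))^2
      = (p 0 e + p 1 e) - 4 * (p 0 e * p 1 e / (p 0 e + p 1 e)) := by
    intro e
    rcases (add_nonneg (hp 0 e) (hp 1 e)).eq_or_lt with hq | hq
    · have h0 : p 0 e = 0 := le_antisymm (by linarith [hp 1 e]) (hp 0 e)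
      have h1 : p 1 e = 0 := by linarith [hp 0 e]
      simp [h0, h1]
    · rw [div_pow, sq_abs, Real.sq_sqrt (le_of_lt hq)]
      field_simp
      ring
  have hCS1 : (∑ e, |p 0 e - p 1 e|)^2 ≤ 1 - 4 * ∑ e, p 0 e * p 1 e / (p 0 e + p 1 e) := by
    calc (∑ e, |p 0 e - p 1 e|)^2
        = (∑ e, Real.sqrt (p 0 e + p 1 e) *
            (|p 0 e - p 1 e| / Real.sqrt (p 0 e + p 1 e)))^2 := by
          congr 1; exact Finset.sum_congr rfl fun e _ => habs e
      _ ≤ (∑ e, Real.sqrt (p 0 e + p 1 e)^2) *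
            ∑ e, (|p 0 e - p 1 e| / Real.sqrt (p 0 e + p 1 e))^2 :=
          Finset.sum_mul_sq_le_sq_mul_sq _ _ _
      _ = (∑ e, (p 0 e + p 1 e)) *
            ∑ e, ((p 0 e + p 1 e) - 4 * (p 0 e * p 1 e / (p 0 e + p 1 e))) := by
          congr 1
          · exact Finset.sum_congr rfl fun e _ => Real.sq_sqrt (add_nonneg (hp 0 e) (hp 1 e))
          · exact Finset.sum_congr rfl fun e _ => hsq e
      _ = 1 - 4 * ∑ e, p 0 e * p 1 e / (p 0 e + p 1 e) := by
          rw [hq1, one_mul, Finset.sum_sub_distrib, hq1, ← Finset.mul_sum]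
  have hFrep : ∀ e, Real.sqrt (p 0 e) * Real.sqrt (p 1 e)
      = Real.sqrt (p 0 e + p 1 e) *
        (Real.sqrt (p 0 e * p 1 e) / Real.sqrt (p 0 e + p 1 e)) := by
    intro e
    rcases (add_nonneg (hp 0 e) (hp 1 e)).eq_or_lt with hq | hq
    · have h0 : p 0 e = 0 := le_antisymm (by linarith [hp 1 e]) (hp 0 e)
      simp [h0]
    · rw [← Real.sqrt_mul (hp 0 e),
        mul_comm (Real.sqrt (p 0 e + p 1 e)),
        div_mul_cancel₀ _ (ne_of_gt (Real.sqrt_pos.2 hq))]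
  have hsq2 : ∀ e, (Real.sqrt (p 0 e * p 1 e) / Real.sqrt (p 0 e + p 1 e))^2
      = p 0 e * p 1 e / (p 0 e + p 1 e) := by
    intro e
    rw [div_pow, Real.sq_sqrt (mul_nonneg (hp 0 e) (hp 1 e)),
      Real.sq_sqrt (add_nonneg (hp 0 e) (hp 1 e))]
  have hCS2 : F^2 ≤ ∑ e, p 0 e * p 1 e / (p 0 e + p 1 e) := by
    calc F^2 = (∑ e, Real.sqrt (p 0 e + p 1 e) *
            (Real.sqrt (p 0 e * p 1 e) / Real.sqrt (p 0 e + p 1 e)))^2 := by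
          rw [hF]; congr 1; exact Finset.sum_congr rfl fun e _ => hFrep e
      _ ≤ (∑ e, Real.sqrt (p 0 e + p 1 e)^2) *
            ∑ e, (Real.sqrt (p 0 e * p 1 e) / Real.sqrt (p 0 e + p 1 e))^2 :=
          Finset.sum_mul_sq_le_sq_mul_sq _ _ _
      _ = 1 * ∑ e, p 0 e * p 1 e / (p 0 e + p 1 e) := by
          congr 1
          · rw [← hq1]
            exact Finset.sum_congr rfl fun e _ => Real.sq_sqrt (add_nonneg (hp 0 e) (hp 1 e))
          · exact Finset.sum_congr rfl fun e _ => hsq2 e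
      _ = ∑ e, p 0 e * p 1 e / (p 0 e + p 1 e) := one_mul _
  have hF0 : 0 ≤ F := by
    rw [hF]
    exact Finset.sum_nonneg fun e _ => mul_nonneg (Real.sqrt_nonneg _) (Real.sqrt_nonneg _)
  have hB : (∑ e, |p 0 e - p 1 e|)^2 ≤ 1 - 4 * F^2 := by linarith [hCS1, hCS2]
  have hkey : 1 - 4 * F^2 ≤ 4 * D := by
    rcases le_or_gt (1/4 : ℝ) D with hd | hd
    · nlinarith [sq_nonneg F]
    · have h1 : 1 - 2*D ≤ 2*F := by linarith
      nlinarith [mul_self_le_mul_self (by linarith : (0:ℝ) ≤ 1 - 2*D) h1]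
  have habs0 : 0 ≤ ∑ e, |p 0 e - p 1 e| := Finset.sum_nonneg fun e _ => abs_nonneg _
  have hfinal : ∑ e, |p 0 e - p 1 e| ≤ Real.sqrt (4 * D) := by
    rw [Real.le_sqrt habs0 (by linarith)]
    linarith [hB, hkey]
  have h4D : Real.sqrt (4 * D) = 2 * Real.sqrt D := by
    rw [show (4:ℝ) * D = 2^2 * D by ring, Real.sqrt_mul (by positivity),
      Real.sqrt_sq (by norm_num : (0:ℝ) ≤ 2)]
  linarith [hA, hfinal, h4D.le]
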